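/- Assume 0 < μ < 1/L_f, 0 < β < 2, ρ > 0, and b ∈ Im(A); let σ > 0 satisfy ‖Aᵀλ‖ ≥ σ‖λ‖ for every λ ∈ Im(A). Consider the LCDC-ALM iterates with λ⁰ ∈ Im(A): for each k ≥ 0, x^{k+1} minimizes x ↦ ⟨∇f(x^k), x − x^k⟩ + ⟨λ^k, Ax − b⟩ + (ρ/2)‖Ax − b‖² + ‖x − z^k‖²/(2μ); x_{μg}(z^k) is the proximal point of g at z^k; z^{k+1} = z^k + β(x^{k+1} − x_{μg}(z^k)); λ^{k+1} = λ^k + ρ(Ax^{k+1} − b); with conventions x^{−1} = x⁰ and z^{−1} = x⁰ + μ(∇f(x⁰) + Aᵀλ⁰). Set c₁ = (μ^{-1} − L_f)/2, c₂ = (1/β − 1/2)/μ, c₃ = 3μ^{-2}/σ², c₄ = 3L_f²/σ², and let ν > 0 be such that κ₁ = c₁ − c₃/ρ − ν/2 > 0, κ₂ = c₂ − ν/2 > 0, κ₃ = ν/2 − c₄/ρ > 0, κ₄ = ν/2 − c₃/ρ > 0. Define Ψ_k = ψ(x^k, z^k, λ^k) + (ν/2)‖x^k − x^{k−1}‖²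 + (ν/2)‖z^k − z^{k−1}‖². Then for all k ≥ 0, Ψ_k − Ψ_{k+1} ≥ κ₁‖x^{k+1} − x^k‖² + κ₂‖z^{k+1} − z^k‖² + κ₃‖x^k − x^{k−1}‖² + κ₄‖z^k − z^{k−1}‖². -/

import Mathlib

open scoped RealInnerProductSpace

noncomputable section

/-- `ℝⁿ` with the Euclidean norm. -/
abbrev En (n : ℕ) := EuclideanSpace ℝ (Fin n)

/-- Real-valued Moreau envelope/proximal map of the convex function `g`. -/
def IsMoreauR {n : ℕ} (g : En n → ℝ) (μ : ℝ) (Mg : En n → ℝ) (xg : En n → En n) : Prop :=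
  ∀ z : En n,
    Mg z = g (xg z) + ‖xg z - z‖ ^ 2 / (2 * μ) ∧
    (∀ x, Mg z ≤ g x + ‖x - z‖ ^ 2 / (2 * μ)) ∧
    (∀ x, g x + ‖x - z‖ ^ 2 / (2 * μ) = Mg z → x = xg z)

/-- The smoothed proximal augmented Lagrangian
`ψ(x,z,λ) = f(x) + ⟨λ, Ax−b⟩ + (ρ/2)‖Ax−b‖² + ‖x−z‖²/(2μ) − M_{μg}(z)`. -/
def psiAL {n m : ℕ} (f : En n → ℝ) (Mg : En n → ℝ) (A : En n →L[ℝ] En m) (b : En m)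
    (μ ρ : ℝ) (x z : En n) (lam : En m) : ℝ :=
  f x + ⟪lam, A x - b⟫ + (ρ / 2) * ‖A x - b‖ ^ 2 + ‖x - z‖ ^ 2 / (2 * μ) - Mg z

/-!
Each block of an iteration decreases `ψ` by a definite amount: the `x`-step because the descent
lemma for `f` is beaten by the `1/μ`-strong convexity of the subproblem, the `z`-step because
`M_{μg}` is convex with gradient `(z - x_{μg}(z))/μ`; only the multiplier step increases `ψ`,
by exactly `‖λ^{k+1} - λ^k‖²/ρ`. The optimality condition of the `x`-subproblem expresses
`Aᵀλ^{k+1}` through `∇f(x^k)`, `x^{k+1}` and `z^k`, so `Aᵀ(λ^{k+1} - λ^k)` is bounded by the last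
two increments of `x` and `z`. As `λ^{k+1} - λ^k ∈ Im(A)`, the same holds for `‖λ^{k+1} - λ^k‖`,
and the `ν`-terms of `Ψ` absorb the increments from the previous iteration.
-/

open Set Filter Topology

lemma nonneg_of_forall_mem_Ioc_nonneg_add_mul {d c : ℝ}
    (h : ∀ t ∈ Ioc (0 : ℝ) 1, 0 ≤ d + t * c) : 0 ≤ d := by
  have hlim : Tendsto (fun t : ℝ => d + t * c) (𝓝[>] 0) (𝓝 d) := by
    have hc : Continuous fun t : ℝ => d + t * c := by fun_prop
    simpa using (hc.tendsto 0).mono_left nhdsWithin_le_nhds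
  exact ge_of_tendsto hlim (eventually_of_mem (Ioc_mem_nhdsGT zero_lt_one) h)

section InnerProductSpace

variable {E : Type*} [NormedAddCommGroup E] [InnerProductSpace ℝ E]

lemma eq_zero_of_forall_inner_smul_add_sq_nonneg {v : E} {c : ℝ}
    (h : ∀ t : ℝ, 0 ≤ ⟪v, t • v⟫ + t ^ 2 * c) : v = 0 := by
  have hv : 0 ≤ -‖v‖ ^ 2 := nonneg_of_forall_mem_Ioc_nonneg_add_mul (c := c) fun t ht => by
    have := h (-t)
    rw [real_inner_smul_right, real_inner_self_eq_norm_sq] at this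
    nlinarith [ht.1]
  have hv0 : ‖v‖ ^ 2 = 0 := by linarith [sq_nonneg ‖v‖]
  simpa using hv0

lemma le_add_inner_add_sq_of_lipschitz_gradient [CompleteSpace E] {f : E → ℝ} {f' : E → E}
    {L : ℝ} (hf : ∀ x, HasGradientAt f (f' x) x) (hL : ∀ x y, ‖f' x - f' y‖ ≤ L * ‖x - y‖)
    (x y : E) : f y ≤ f x + ⟪f' x, y - x⟫ + L / 2 * ‖y - x‖ ^ 2 := by
  set v := y - x
  let φ : ℝ → ℝ := fun t => f (x + t • v) - t * ⟪f' x, v⟫ - t ^ 2 * (L / 2 * ‖v‖ ^ 2)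
  have hline : ∀ t : ℝ, HasDerivAt (fun t : ℝ => x + t • v) v t := fun t => by
    simpa using ((hasDerivAt_id t).smul_const v).const_add x
  have hφ : ∀ t, HasDerivAt φ (⟪f' (x + t • v) - f' x, v⟫ - t * L * ‖v‖ ^ 2) t := fun t => by
    have hfl : HasDerivAt (fun t : ℝ => f (x + t • v)) ⟪f' (x + t • v), v⟫ t := by
      simpa [InnerProductSpace.toDual_apply_apply, Function.comp_def] using
        (hf (x + t • v)).hasFDerivAt.comp_hasDerivAt t (hline t)
    refine ((hfl.sub ((hasDerivAt_id t).mul_const ⟪f' x, v⟫)).sub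
      ((hasDerivAt_pow 2 t).mul_const (L / 2 * ‖v‖ ^ 2))).congr_deriv ?_
    rw [inner_sub_left]
    ring
  have hanti : AntitoneOn φ (Ici 0) := by
    refine antitoneOn_of_hasDerivWithinAt_nonpos (convex_Ici 0)
      (fun t _ => (hφ t).continuousAt.continuousWithinAt) (fun t _ => (hφ t).hasDerivWithinAt)
      fun t ht => ?_
    rw [interior_Ici, mem_Ioi] at ht
    have hgrad : ‖f' (x + t • v) - f' x‖ ≤ L * (t * ‖v‖) := by
      simpa [norm_smul, abs_of_pos ht] using hL (x + t • v) x
    nlinarith [real_inner_le_norm (f' (x + t • v) - f' x) v,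
      mul_le_mul_of_nonneg_right hgrad (norm_nonneg v)]
  have hφ0 : φ 0 = f x := by simp [φ]
  have hφ1 : φ 1 = f y - ⟪f' x, y - x⟫ - L / 2 * ‖y - x‖ ^ 2 := by simp [φ, v]
  linarith [hanti self_mem_Ici (mem_Ici.2 zero_le_one) zero_le_one]

lemma ConvexOn.add_inv_mul_inner_le_of_isMinOn {g : E → ℝ} (hg : ConvexOn ℝ univ g) {μ : ℝ}
    {z p : E}
    (hp : ∀ w, g p + ‖p - z‖ ^ 2 / (2 * μ) ≤ g w + ‖w - z‖ ^ 2 / (2 * μ)) (w : E) :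
    g p + μ⁻¹ * ⟪z - p, w - p⟫ ≤ g w := by
  suffices 0 ≤ g w - g p - μ⁻¹ * ⟪z - p, w - p⟫ by linarith
  refine nonneg_of_forall_mem_Ioc_nonneg_add_mul (c := ‖w - p‖ ^ 2 / (2 * μ)) fun t ht => ?_
  have hmin := hp (p + t • (w - p))
  have hconv : g (p + t • (w - p)) ≤ (1 - t) * g p + t * g w := by
    simpa [smul_sub, sub_smul, add_sub, add_comm] using
      hg.2 (mem_univ p) (mem_univ w) (sub_nonneg.2 ht.2) ht.1.le (by ring)
  have hexpand : ‖p + t • (w - p) - z‖ ^ 2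
      = ‖p - z‖ ^ 2 - 2 * t * ⟪z - p, w - p⟫ + t ^ 2 * ‖w - p‖ ^ 2 := by
    rw [show p + t • (w - p) - z = (p - z) + t • (w - p) by abel, norm_add_sq_real,
      real_inner_smul_right, norm_smul, mul_pow, Real.norm_eq_abs, sq_abs,
      ← neg_sub z p, inner_neg_left]
    ring
  rw [hexpand] at hmin
  have key : 0 ≤ t * (g w - g p - μ⁻¹ * ⟪z - p, w - p⟫ + t * (‖w - p‖ ^ 2 / (2 * μ))) := by
    linear_combination hmin + hconv
  exact nonneg_of_mul_nonneg_right (by linarith) ht.1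

end InnerProductSpace

section LinearizedAL

variable {E F : Type*} [NormedAddCommGroup E] [InnerProductSpace ℝ E] [CompleteSpace E]
  [NormedAddCommGroup F] [InnerProductSpace ℝ F] [CompleteSpace F]
  (A : E →L[ℝ] F) (b : F) (μ ρ : ℝ) (d y z : E) (lam : F)

/-- The objective of the `x`-subproblem, with `∇f(x^k)` and `x^k` replaced by `d` and `y`. -/
def linearizedAL (w : E) : ℝ :=
  ⟪d, w - y⟫ + ⟪lam, A w - b⟫ + (ρ / 2) * ‖A w - b‖ ^ 2 + ‖w - z‖ ^ 2 / (2 * μ)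

def linearizedALGrad (p : E) : E :=
  d + ContinuousLinearMap.adjoint A (lam + ρ • (A p - b)) + μ⁻¹ • (p - z)

lemma linearizedAL_sub (p w : E) :
    linearizedAL A b μ ρ d y z lam w - linearizedAL A b μ ρ d y z lam p =
      ⟪linearizedALGrad A b μ ρ d z lam p, w - p⟫ + (ρ / 2) * ‖A (w - p)‖ ^ 2 +
        ‖w - p‖ ^ 2 / (2 * μ) := by
  obtain ⟨h, rfl⟩ : ∃ h, w = p + h := ⟨w - p, by abel⟩
  have hAw : A (p + h) - b = (A p - b) + A h := by rw [map_add]; abel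
  simp only [linearizedAL, linearizedALGrad, hAw, add_sub_cancel_left, inner_add_left,
    inner_add_right, inner_sub_right, real_inner_smul_left,
    ContinuousLinearMap.adjoint_inner_left, norm_add_sq_real,
    show p + h - z = (p - z) + h by abel]
  ring

variable {A b μ ρ d y z lam}

lemma linearizedALGrad_eq_zero {p : E}
    (hp : ∀ w, linearizedAL A b μ ρ d y z lam p ≤ linearizedAL A b μ ρ d y z lam w) :
    linearizedALGrad A b μ ρ d z lam p = 0 := by
  set G := linearizedALGrad A b μ ρ d z lam p with hG
  refine eq_zero_of_forall_inner_smul_add_sq_nonneg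
    (c := (ρ / 2) * ‖A G‖ ^ 2 + ‖G‖ ^ 2 / (2 * μ)) fun t => ?_
  have h := linearizedAL_sub A b μ ρ d y z lam p (p + t • G)
  rw [← hG, add_sub_cancel_left, map_smul, norm_smul, norm_smul, mul_pow, mul_pow,
    Real.norm_eq_abs, sq_abs] at h
  have hmin := sub_nonneg.2 (hp (p + t • G))
  rw [h] at hmin
  linear_combination hmin

lemma adjoint_eq_of_linearizedALGrad_eq_zero {p : E} {lam' : F}
    (hG : linearizedALGrad A b μ ρ d z lam p = 0) (hlam' : lam' = lam + ρ • (A p - b)) :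
    ContinuousLinearMap.adjoint A lam' = -d - μ⁻¹ • (p - z) := by
  rw [hlam', ← sub_eq_zero, ← hG, linearizedALGrad]
  abel

lemma linearizedAL_add_sq_le (hρ : 0 ≤ ρ) {p : E}
    (hp : ∀ w, linearizedAL A b μ ρ d y z lam p ≤ linearizedAL A b μ ρ d y z lam w) (w : E) :
    linearizedAL A b μ ρ d y z lam p + ‖w - p‖ ^ 2 / (2 * μ) ≤
      linearizedAL A b μ ρ d y z lam w := by
  have h := linearizedAL_sub A b μ ρ d y z lam p w
  rw [linearizedALGrad_eq_zero hp, inner_zero_left] at h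
  nlinarith [sq_nonneg ‖A (w - p)‖]

lemma norm_adjoint_sub_le {f' : E → E} {L : ℝ} (hL : ∀ x y, ‖f' x - f' y‖ ≤ L * ‖x - y‖)
    (hμ : 0 ≤ μ) {x₀ x x' z₀ : E} {lam' : F}
    (h : ContinuousLinearMap.adjoint A lam = -f' x₀ - μ⁻¹ • (x - z₀))
    (h' : ContinuousLinearMap.adjoint A lam' = -f' x - μ⁻¹ • (x' - z)) :
    ‖ContinuousLinearMap.adjoint A (lam' - lam)‖ ≤
      L * ‖x - x₀‖ + μ⁻¹ * ‖x' - x‖ + μ⁻¹ * ‖z - z₀‖ := by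
  have hdiff : ContinuousLinearMap.adjoint A (lam' - lam) =
      -(f' x - f' x₀) - μ⁻¹ • (x' - x) + μ⁻¹ • (z - z₀) := by
    rw [map_sub, h, h']
    module
  rw [hdiff]
  calc _ ≤ ‖f' x - f' x₀‖ + ‖μ⁻¹ • (x' - x)‖ + ‖μ⁻¹ • (z - z₀)‖ := by
        grw [norm_add_le, norm_sub_le, norm_neg]
    _ ≤ _ := by
        rw [norm_smul, norm_smul, Real.norm_of_nonneg (inv_nonneg.2 hμ)]
        grw [hL]

lemma sq_norm_sub_le_of_adjoint_eq {σ : ℝ} (hσ : 0 < σ) {f' : E → E} {L : ℝ}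
    (hL : ∀ x y, ‖f' x - f' y‖ ≤ L * ‖x - y‖) (hμ : 0 ≤ μ) {x₀ x x' z₀ : E} {lam' : F}
    (hσA : σ * ‖lam' - lam‖ ≤ ‖ContinuousLinearMap.adjoint A (lam' - lam)‖)
    (h : ContinuousLinearMap.adjoint A lam = -f' x₀ - μ⁻¹ • (x - z₀))
    (h' : ContinuousLinearMap.adjoint A lam' = -f' x - μ⁻¹ • (x' - z)) :
    ‖lam' - lam‖ ^ 2 ≤ 3 * L ^ 2 / σ ^ 2 * ‖x - x₀‖ ^ 2 +
      3 * μ⁻¹ ^ 2 / σ ^ 2 * ‖x' - x‖ ^ 2 + 3 * μ⁻¹ ^ 2 / σ ^ 2 * ‖z - z₀‖ ^ 2 := by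
  have hbound := hσA.trans (norm_adjoint_sub_le hL hμ h h')
  set a := L * ‖x - x₀‖
  set b := μ⁻¹ * ‖x' - x‖
  set c := μ⁻¹ * ‖z - z₀‖
  have hsq : (σ * ‖lam' - lam‖) ^ 2 ≤ 3 * (a ^ 2 + b ^ 2 + c ^ 2) := by
    nlinarith [mul_nonneg hσ.le (norm_nonneg (lam' - lam)), sq_nonneg (a - b), sq_nonneg (b - c),
      sq_nonneg (a - c)]
  calc ‖lam' - lam‖ ^ 2 = (σ * ‖lam' - lam‖) ^ 2 / σ ^ 2 := by field_simp
    _ ≤ 3 * (a ^ 2 + b ^ 2 + c ^ 2) / σ ^ 2 := by gcongr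
    _ = _ := by ring

end LinearizedAL

lemma IsMoreauR.add_inv_mul_inner_le {n : ℕ} {g : En n → ℝ} {μ : ℝ} {Mg : En n → ℝ}
    {xg : En n → En n} (hM : IsMoreauR g μ Mg xg) (hg : ConvexOn ℝ univ g) (hμ : 0 < μ)
    (z z' : En n) : Mg z + μ⁻¹ * ⟪z - xg z, z' - z⟫ ≤ Mg z' := by
  obtain ⟨hMz, hmin, -⟩ := hM z
  have hvi := hg.add_inv_mul_inner_le_of_isMinOn (fun w => hMz ▸ hmin w) (xg z')
  rw [(hM z').1, hMz]
  set u := z - xg z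
  have hsplit : z' - z = (z' - xg z') - u + (xg z' - xg z) := by simp only [u]; abel
  have hsq : ‖xg z - z‖ ^ 2 + 2 * ⟪u, z' - z⟫ ≤ 2 * ⟪u, xg z' - xg z⟫ + ‖xg z' - z'‖ ^ 2 := by
    rw [hsplit, inner_add_right, inner_sub_right, real_inner_self_eq_norm_sq, ← neg_sub z,
      norm_neg, norm_sub_rev (xg z') z']
    nlinarith [norm_sub_sq_real u (z' - xg z'), sq_nonneg ‖u - (z' - xg z')‖,
      real_inner_comm u (z' - xg z')]
  have hsq' := mul_le_mul_of_nonneg_left hsq (by positivity : (0 : ℝ) ≤ (2 * μ)⁻¹)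
  linear_combination hvi + hsq'

section PsiAL

variable {n m : ℕ} {f : En n → ℝ} {Mg : En n → ℝ} {A : En n →L[ℝ] En m} {b : En m} {μ ρ : ℝ}

lemma psiAL_add_sq_le_of_linearizedAL_min {f' : En n → En n} {L : ℝ}
    (hf : ∀ x, HasGradientAt f (f' x) x) (hL : ∀ x y, ‖f' x - f' y‖ ≤ L * ‖x - y‖)
    (hρ : 0 ≤ ρ) {x x' z : En n} {lam : En m}
    (hx' : ∀ w, linearizedAL A b μ ρ (f' x) x z lam x' ≤ linearizedAL A b μ ρ (f' x) x z lam w) :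
    psiAL f Mg A b μ ρ x' z lam + (μ⁻¹ - L) / 2 * ‖x' - x‖ ^ 2 ≤ psiAL f Mg A b μ ρ x z lam := by
  have hdescent := le_add_inner_add_sq_of_lipschitz_gradient hf hL x x'
  have hstrong := linearizedAL_add_sq_le hρ hx' x
  simp only [linearizedAL, sub_self, inner_zero_right, norm_sub_rev x x'] at hstrong
  simp only [psiAL]
  linear_combination hdescent + hstrong

lemma psiAL_add_sq_le_of_prox_step {g : En n → ℝ} {xg : En n → En n}
    (hM : IsMoreauR g μ Mg xg) (hg : ConvexOn ℝ univ g) (hμ : 0 < μ) {β : ℝ} {x z z' : En n}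
    (hz' : z' = z + β • (x - xg z)) (lam : En m) :
    psiAL f Mg A b μ ρ x z' lam + (1 / β - 1 / 2) / μ * ‖z' - z‖ ^ 2 ≤
      psiAL f Mg A b μ ρ x z lam := by
  have hM' := hM.add_inv_mul_inner_le hg hμ z z'
  subst hz'
  set e := x - xg z
  have hβ : 1 / β * β ^ 2 = β := by rw [one_div, sq, ← mul_assoc, inv_mul_mul_self]
  have hsplit : ⟪x - z, e⟫ + ⟪z - xg z, e⟫ = ‖e‖ ^ 2 := by
    rw [← inner_add_left, sub_add_sub_cancel, real_inner_self_eq_norm_sq]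
  have hnorm : ‖x - (z + β • e)‖ ^ 2 = ‖x - z‖ ^ 2 - 2 * β * ⟪x - z, e⟫ + β ^ 2 * ‖e‖ ^ 2 := by
    rw [sub_add_eq_sub_sub, norm_sub_sq_real, real_inner_smul_right, norm_smul, mul_pow,
      Real.norm_eq_abs, sq_abs]
    ring
  rw [add_sub_cancel_left, real_inner_smul_right] at hM'
  rw [add_sub_cancel_left, norm_smul, mul_pow, Real.norm_eq_abs, sq_abs]
  simp only [psiAL, hnorm]
  linear_combination hM' - μ⁻¹ * β * hsplit + ‖e‖ ^ 2 / μ * hβ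

lemma psiAL_dual_step {x z : En n} {lam lam' : En m} (hlam' : lam' = lam + ρ • (A x - b)) :
    psiAL f Mg A b μ ρ x z lam' = psiAL f Mg A b μ ρ x z lam + ρ⁻¹ * ‖lam' - lam‖ ^ 2 := by
  subst hlam'
  rw [add_sub_cancel_left, norm_smul, mul_pow, Real.norm_eq_abs, sq_abs]
  simp only [psiAL, inner_add_left, real_inner_smul_left, real_inner_self_eq_norm_sq]
  field_simp
  ring

end PsiAL
theorem stmt19_general {n m : ℕ} (f : En n → ℝ) (f' : En n → En n) (Lf : ℝ)
    (hfdiff : ∀ x, HasGradientAt f (f' x) x)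
    (hfLip : ∀ x y : En n, ‖f' x - f' y‖ ≤ Lf * ‖x - y‖)
    (g : En n → ℝ) (hg : ConvexOn ℝ Set.univ g)
    (A : En n →L[ℝ] En m) (b : En m)
    (hb : b ∈ Set.range (fun u : En n => A u))
    (σ : ℝ) (hσ : 0 < σ)
    (hσA : ∀ v : En m, v ∈ Set.range (fun u : En n => A u) →
      σ * ‖v‖ ≤ ‖(ContinuousLinearMap.adjoint A) v‖)
    (μ β ρ : ℝ) (hμ0 : 0 < μ) (hρ : 0 < ρ)
    (c1 c2 c3 c4 ν κ1 κ2 κ3 κ4 : ℝ)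
    (hc1 : c1 = (μ⁻¹ - Lf) / 2) (hc2 : c2 = (1 / β - 1 / 2) / μ)
    (hc3 : c3 = 3 * μ⁻¹ ^ 2 / σ ^ 2) (hc4 : c4 = 3 * Lf ^ 2 / σ ^ 2)
    (hκ1 : κ1 = c1 - c3 / ρ - ν / 2)
    (hκ2 : κ2 = c2 - ν / 2)
    (hκ3 : κ3 = ν / 2 - c4 / ρ)
    (hκ4 : κ4 = ν / 2 - c3 / ρ)
    (Mg : En n → ℝ) (xg : En n → En n) (hgprox : IsMoreauR g μ Mg xg)
    (x z : ℕ → En n) (lam : ℕ → En m)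
    (hx : ∀ k : ℕ, ∀ w : En n,
      ⟪f' (x k), x (k + 1) - x k⟫ + ⟪lam k, A (x (k + 1)) - b⟫ +
          (ρ / 2) * ‖A (x (k + 1)) - b‖ ^ 2 + ‖x (k + 1) - z k‖ ^ 2 / (2 * μ) ≤
        ⟪f' (x k), w - x k⟫ + ⟪lam k, A w - b⟫ +
          (ρ / 2) * ‖A w - b‖ ^ 2 + ‖w - z k‖ ^ 2 / (2 * μ))
    (hz : ∀ k : ℕ, z (k + 1) = z k + β • (x (k + 1) - xg (z k)))
    (hlam : ∀ k : ℕ, lam (k + 1) = lam k + ρ • (A (x (k + 1)) - b)) :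
    ∀ k : ℕ,
      κ1 * ‖x (k + 1) - x k‖ ^ 2 + κ2 * ‖z (k + 1) - z k‖ ^ 2 +
          κ3 * ‖x k - x (k - 1)‖ ^ 2 +
          κ4 * ‖z k - (if k = 0 then
            x 0 + μ • (f' (x 0) + (ContinuousLinearMap.adjoint A) (lam 0))
            else z (k - 1))‖ ^ 2 ≤
        (psiAL f Mg A b μ ρ (x k) (z k) (lam k) +
            ν / 2 * ‖x k - x (k - 1)‖ ^ 2 +
            ν / 2 * ‖z k - (if k = 0 then
              x 0 + μ • (f' (x 0) + (ContinuousLinearMap.adjoint A) (lam 0))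
              else z (k - 1))‖ ^ 2) -
          (psiAL f Mg A b μ ρ (x (k + 1)) (z (k + 1)) (lam (k + 1)) +
            ν / 2 * ‖x (k + 1) - x k‖ ^ 2 +
            ν / 2 * ‖z (k + 1) - z k‖ ^ 2) := by
  intro k
  set zPrev := if k = 0 then x 0 + μ • (f' (x 0) + ContinuousLinearMap.adjoint A (lam 0))
    else z (k - 1) with hzPrev
  have hadj : ∀ j, ContinuousLinearMap.adjoint A (lam (j + 1)) =
      -f' (x j) - μ⁻¹ • (x (j + 1) - z j) := fun j =>
    adjoint_eq_of_linearizedALGrad_eq_zero (linearizedALGrad_eq_zero (hx j)) (hlam j)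
  -- the convention for `z⁻¹` makes this identity hold at `k = 0` as well
  have hadj_k : ContinuousLinearMap.adjoint A (lam k) = -f' (x (k - 1)) - μ⁻¹ • (x k - zPrev) := by
    rcases k with _ | j
    · rw [hzPrev, if_pos rfl, Nat.zero_sub, sub_add_cancel_left, smul_neg, smul_smul,
        inv_mul_cancel₀ hμ0.ne', one_smul]
      abel
    · simpa [zPrev] using hadj j
  have hrange : ∃ u, A u = lam (k + 1) - lam k := by
    obtain ⟨u, hu⟩ := hb
    exact ⟨ρ • (x (k + 1) - u), by simp [hu, hlam k]⟩
  have hdual := sq_norm_sub_le_of_adjoint_eq hσ hfLip hμ0.le (hσA _ hrange) hadj_k (hadj k)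
  have hxstep := psiAL_add_sq_le_of_linearizedAL_min (Mg := Mg) hfdiff hfLip hρ.le (hx k)
  have hzstep := psiAL_add_sq_le_of_prox_step (f := f) (A := A) (b := b) (ρ := ρ)
    hgprox hg hμ0 (hz k) (lam k)
  have hlamstep := psiAL_dual_step (f := f) (Mg := Mg) (μ := μ) (z := z (k + 1)) (hlam k)
  rw [← hc3, ← hc4] at hdual
  have hdual' := mul_le_mul_of_nonneg_left hdual (inv_nonneg.2 hρ.le)
  rw [hκ1, hκ2, hκ3, hκ4, hc1, hc2]
  linear_combination hxstep + hzstep + hdual' + hlamstep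

/-- descent of the potential
`Ψ_k = ψ(x^k,z^k,λ^k) + (ν/2)‖x^k−x^{k−1}‖² + (ν/2)‖z^k−z^{k−1}‖²`
along the LCDC-ALM iterates, with the conventions `x⁻¹ = x⁰` and
`z⁻¹ = x⁰ + μ(∇f(x⁰) + Aᵀλ⁰)`. -/
theorem stmt19 {n m : ℕ} (f : En n → ℝ) (f' : En n → En n) (Lf : ℝ) (hLf : 0 < Lf)
    (hfdiff : ∀ x, HasGradientAt f (f' x) x)
    (hfLip : ∀ x y : En n, ‖f' x - f' y‖ ≤ Lf * ‖x - y‖)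
    (g : En n → ℝ) (hg : ConvexOn ℝ Set.univ g)
    (A : En n →L[ℝ] En m) (hA : A ≠ 0) (b : En m)
    (hb : b ∈ Set.range (fun u : En n => A u))
    (σ : ℝ) (hσ : 0 < σ)
    (hσA : ∀ v : En m, v ∈ Set.range (fun u : En n => A u) →
      σ * ‖v‖ ≤ ‖(ContinuousLinearMap.adjoint A) v‖)
    (μ β ρ : ℝ) (hμ0 : 0 < μ) (hμ1 : μ < 1 / Lf) (hβ0 : 0 < β) (hβ2 : β < 2) (hρ : 0 < ρ)
    (c1 c2 c3 c4 ν κ1 κ2 κ3 κ4 : ℝ)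
    (hc1 : c1 = (μ⁻¹ - Lf) / 2) (hc2 : c2 = (1 / β - 1 / 2) / μ)
    (hc3 : c3 = 3 * μ⁻¹ ^ 2 / σ ^ 2) (hc4 : c4 = 3 * Lf ^ 2 / σ ^ 2)
    (hν : 0 < ν)
    (hκ1 : κ1 = c1 - c3 / ρ - ν / 2) (hκ1pos : 0 < κ1)
    (hκ2 : κ2 = c2 - ν / 2) (hκ2pos : 0 < κ2)
    (hκ3 : κ3 = ν / 2 - c4 / ρ) (hκ3pos : 0 < κ3)
    (hκ4 : κ4 = ν / 2 - c3 / ρ) (hκ4pos : 0 < κ4)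
    (Mg : En n → ℝ) (xg : En n → En n) (hgprox : IsMoreauR g μ Mg xg)
    (x z : ℕ → En n) (lam : ℕ → En m)
    (hlam0 : lam 0 ∈ Set.range (fun u : En n => A u))
    (hx : ∀ k : ℕ, ∀ w : En n,
      ⟪f' (x k), x (k + 1) - x k⟫ + ⟪lam k, A (x (k + 1)) - b⟫ +
          (ρ / 2) * ‖A (x (k + 1)) - b‖ ^ 2 + ‖x (k + 1) - z k‖ ^ 2 / (2 * μ) ≤
        ⟪f' (x k), w - x k⟫ + ⟪lam k, A w - b⟫ +
          (ρ / 2) * ‖A w - b‖ ^ 2 + ‖w - z k‖ ^ 2 / (2 * μ))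
    (hz : ∀ k : ℕ, z (k + 1) = z k + β • (x (k + 1) - xg (z k)))
    (hlam : ∀ k : ℕ, lam (k + 1) = lam k + ρ • (A (x (k + 1)) - b)) :
    ∀ k : ℕ,
      κ1 * ‖x (k + 1) - x k‖ ^ 2 + κ2 * ‖z (k + 1) - z k‖ ^ 2 +
          κ3 * ‖x k - x (k - 1)‖ ^ 2 +
          κ4 * ‖z k - (if k = 0 then
            x 0 + μ • (f' (x 0) + (ContinuousLinearMap.adjoint A) (lam 0))
            else z (k - 1))‖ ^ 2 ≤
        (psiAL f Mg A b μ ρ (x k) (z k) (lam k) +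
            ν / 2 * ‖x k - x (k - 1)‖ ^ 2 +
            ν / 2 * ‖z k - (if k = 0 then
              x 0 + μ • (f' (x 0) + (ContinuousLinearMap.adjoint A) (lam 0))
              else z (k - 1))‖ ^ 2) -
          (psiAL f Mg A b μ ρ (x (k + 1)) (z (k + 1)) (lam (k + 1)) +
            ν / 2 * ‖x (k + 1) - x k‖ ^ 2 +
            ν / 2 * ‖z (k + 1) - z k‖ ^ 2) :=
  stmt19_general f f' Lf hfdiff hfLip g hg A b hb σ hσ hσA μ β ρ hμ0 hρ c1 c2 c3 c4 ν κ1 κ2 κ3 κ4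
    hc1 hc2 hc3 hc4 hκ1 hκ2 hκ3 hκ4 Mg xg hgprox x z lam hx hz hlam
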